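/- arXiv:1011.1724 — 3 statements merged into one kernel-verified Lean document; each statement's English description precedes it below -/
import Mathlib

section
/- Let γ ≠ 0 be real and (σ_N) a sequence of reals with σ_N > −1, σ_N ≠ 0, and N·σ_N → γ as N → ∞. Let i_N be any integers with 0 ≤ i_N ≤ N−1 and set x_N = i_N/N. Then lim_{N→∞} [1 − (1 − (1+σ_N)^{−i_N})/(1 − (1+σ_N)^{−N})] / [(s(1) − s(x_N))/s(1)] = 1, where s(x) = (1 − e^{−γx})/γ. -/
/-!
Put `c_N = N log(1 + σ_N)`, so that `c_N → γ`. Then `(1 + σ_N)^{-i} = e^{-c_N x_N}`, and the loss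
probability of the Moran chain is exactly `(s_c(1) − s_c(x))/s_c(1) = (e^{c(1-x)} − 1)/(e^c − 1)`
at `c = c_N`, `x = x_N`. Writing `e^u − 1 = u E(u)` with `E(u) = ∫₀¹ e^{ut} dt`, the factors `1 - x`
cancel in the ratio, and since `log E` is 1-Lipschitz the logarithm of the ratio is bounded by
`2|c_N − γ|` uniformly in `x ∈ [0, 1)`; no control of `x_N` is needed.
-/

open Filter

noncomputable def scaleFn (γ x : ℝ) : ℝ := (1 - Real.exp (-(γ * x))) / γ

open Real Topology

/-- `(exp u - 1) / u`, written as an integral so that it needs no case split at `u = 0`. -/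
noncomputable def expSlope (u : ℝ) : ℝ := ∫ t in (0 : ℝ)..1, exp (u * t)

lemma mul_expSlope (u : ℝ) : u * expSlope u = exp u - 1 := by
  rcases eq_or_ne u 0 with rfl | hu
  · simp
  · rw [expSlope, intervalIntegral.integral_comp_mul_left (fun t => exp t) hu, integral_exp]
    simp [hu]

lemma expSlope_pos (u : ℝ) : 0 < expSlope u :=
  intervalIntegral.intervalIntegral_pos_of_pos_on (Continuous.intervalIntegrable (by fun_prop) _ _)
    (fun _ _ => exp_pos _) one_pos

lemma expSlope_le_exp_abs_sub_mul (u v : ℝ) : expSlope u ≤ exp |u - v| * expSlope v := by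
  rw [expSlope, expSlope, ← intervalIntegral.integral_const_mul]
  refine intervalIntegral.integral_mono_on zero_le_one
    (Continuous.intervalIntegrable (by fun_prop) _ _)
    (Continuous.intervalIntegrable (by fun_prop) _ _) ?_
  rintro t ⟨ht0, ht1⟩
  have : (u - v) * t ≤ |u - v| := by
    nlinarith [le_abs_self (u - v), abs_nonneg (u - v)]
  calc exp (u * t) = exp ((u - v) * t) * exp (v * t) := by rw [← exp_add]; ring_nf
    _ ≤ exp |u - v| * exp (v * t) := by gcongr

lemma lipschitzWith_log_expSlope : LipschitzWith 1 (fun u => log (expSlope u)) := by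
  refine LipschitzWith.of_le_add fun u v => ?_
  calc log (expSlope u) ≤ log (exp |u - v| * expSlope v) :=
        log_le_log (expSlope_pos u) (expSlope_le_exp_abs_sub_mul u v)
    _ = log (expSlope v) + dist u v := by
        rw [log_mul (exp_ne_zero _) (expSlope_pos v).ne', log_exp, dist_eq, add_comm]

/-- For `g ≠ 0`: the probability that the diffusion with scale function `scaleFn g`, started at `x`,
hits `0` before `1`. -/
noncomputable def lossProb (g x : ℝ) : ℝ := 1 - (1 - exp (-(g * x))) / (1 - exp (-g))

lemma lossProb_eq_mul_expSlope_div {g : ℝ} (hg : g ≠ 0) (x : ℝ) :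
    lossProb g x = (1 - x) * expSlope (g * (1 - x)) / expSlope g := by
  have hE : expSlope g = (exp g - 1) / g := by
    rw [eq_div_iff hg, mul_comm, mul_expSlope]
  have hEx : (1 - x) * expSlope (g * (1 - x)) = (exp (g * (1 - x)) - 1) / g := by
    rw [eq_div_iff hg, ← mul_expSlope]; ring
  have hsplit : exp (-(g * x)) = exp (g * (1 - x)) * exp (-g) := by rw [← exp_add]; ring_nf
  have hexp : exp g - 1 ≠ 0 := sub_ne_zero.mpr fun h => hg (by simpa using h)
  have hexp' : 1 - exp (-g) ≠ 0 := sub_ne_zero.mpr fun h => hg (by simpa using h.symm)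
  rw [hEx, hE, lossProb, hsplit, exp_neg]
  field_simp
  ring

lemma scaleFn_sub_div_scaleFn {γ : ℝ} (hγ : γ ≠ 0) (x : ℝ) :
    (scaleFn γ 1 - scaleFn γ x) / scaleFn γ 1 = lossProb γ x := by
  have hexp : 1 - exp (-γ) ≠ 0 := sub_ne_zero.mpr fun h => hγ (by simpa using h.symm)
  simp only [scaleFn, lossProb, mul_one]
  field_simp

lemma one_sub_zpow_div_eq_lossProb {σ : ℝ} (hσ : 0 < 1 + σ) {N : ℕ} (hN : N ≠ 0) (i : ℕ) :
    1 - (1 - (1 + σ) ^ (-(i : ℤ))) / (1 - (1 + σ) ^ (-(N : ℤ)))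
      = lossProb (N * log (1 + σ)) (i / N) := by
  have hpow (m : ℕ) : (1 + σ) ^ (-(m : ℤ)) = exp (-(m * log (1 + σ))) := by
    rw [← rpow_intCast, rpow_def_of_pos hσ]; push_cast; ring_nf
  have hN' : (N : ℝ) ≠ 0 := Nat.cast_ne_zero.mpr hN
  rw [hpow, hpow, lossProb]
  field_simp

lemma lossProb_div_lossProb_eq_exp {c γ x : ℝ} (hc : c ≠ 0) (hγ : γ ≠ 0) (hx : x ≠ 1) :
    lossProb c x / lossProb γ x =
      exp ((log (expSlope (c * (1 - x))) - log (expSlope (γ * (1 - x))))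
        - (log (expSlope c) - log (expSlope γ))) := by
  have hx' : 1 - x ≠ 0 := sub_ne_zero.mpr (Ne.symm hx)
  simp only [exp_sub, exp_log (expSlope_pos _), lossProb_eq_mul_expSlope_div hc,
    lossProb_eq_mul_expSlope_div hγ]
  have := expSlope_pos c; have := expSlope_pos γ
  have := expSlope_pos (c * (1 - x)); have := expSlope_pos (γ * (1 - x))
  field_simp

lemma abs_log_lossProb_div_lossProb_le {c γ x : ℝ} (hc : c ≠ 0) (hγ : γ ≠ 0)
    (hx : x ∈ Set.Ico 0 1) : |log (lossProb c x / lossProb γ x)| ≤ 2 * |c - γ| := by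
  have hL (u v : ℝ) : |log (expSlope u) - log (expSlope v)| ≤ |u - v| := by
    simpa [dist_eq] using lipschitzWith_log_expSlope.dist_le_mul u v
  have hy : |1 - x| ≤ 1 := abs_le.mpr ⟨by linarith [hx.2], by linarith [hx.1]⟩
  rw [lossProb_div_lossProb_eq_exp hc hγ hx.2.ne, log_exp]
  calc _ ≤ |c * (1 - x) - γ * (1 - x)| + |c - γ| :=
        (abs_sub _ _).trans (add_le_add (hL _ _) (hL _ _))
    _ = |c - γ| * |1 - x| + |c - γ| := by rw [← sub_mul, abs_mul]
    _ ≤ 2 * |c - γ| := by nlinarith [abs_nonneg (c - γ)]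

lemma tendsto_lossProb_div_lossProb {α : Type*} {l : Filter α} {c x : α → ℝ} {γ : ℝ}
    (hγ : γ ≠ 0) (hc : Tendsto c l (𝓝 γ)) (hx : ∀ᶠ a in l, x a ∈ Set.Ico 0 1) :
    Tendsto (fun a => lossProb (c a) (x a) / lossProb γ (x a)) l (𝓝 1) := by
  have hbound : Tendsto (fun a => 2 * |c a - γ|) l (𝓝 0) := by
    simpa using ((hc.sub_const γ).abs).const_mul 2
  have hlog : Tendsto (fun a => log (lossProb (c a) (x a) / lossProb γ (x a))) l (𝓝 0) :=
    squeeze_zero_norm' ((hc.eventually_ne hγ).and hx |>.mono fun a ha =>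
      abs_log_lossProb_div_lossProb_le ha.1 hγ ha.2) hbound
  refine ((continuous_exp.tendsto 0).comp hlog).congr' ?_ |>.trans (by rw [exp_zero])
  filter_upwards [hc.eventually_ne hγ, hx] with a hca hxa
  refine exp_log ?_
  rw [lossProb_div_lossProb_eq_exp hca hγ hxa.2.ne]
  exact exp_pos _

lemma tendsto_mul_log_one_add {α : Type*} {l : Filter α} {b σ : α → ℝ} {γ : ℝ}
    (hb : ∀ᶠ a in l, 0 ≤ b a) (hσ : Tendsto σ l (𝓝 0))
    (hbσ : Tendsto (fun a => b a * σ a) l (𝓝 γ)) :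
    Tendsto (fun a => b a * log (1 + σ a)) l (𝓝 γ) := by
  have hlower : Tendsto (fun a => b a * σ a / (1 + σ a)) l (𝓝 γ) := by
    have h := hbσ.div (tendsto_const_nhds.add hσ) (by norm_num : (1 : ℝ) + 0 ≠ 0)
    rwa [add_zero, div_one] at h
  refine tendsto_of_tendsto_of_tendsto_of_le_of_le' hlower hbσ ?_ ?_
  all_goals
    filter_upwards [hb, hσ.eventually (lt_mem_nhds (by norm_num : (-1 : ℝ) < 0))] with a hba hσa
  · have hσa' : 0 < 1 + σ a := by linarith
    have := one_sub_inv_le_log_of_pos hσa'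
    calc b a * σ a / (1 + σ a) = b a * (1 - (1 + σ a)⁻¹) := by field_simp; ring
      _ ≤ b a * log (1 + σ a) := by gcongr
  · have := log_le_sub_one_of_pos (by linarith : 0 < 1 + σ a)
    calc b a * log (1 + σ a) ≤ b a * (1 + σ a - 1) := by gcongr
      _ = b a * σ a := by ring

theorem moran_fixation_local_limit_at_one_general
    (γ : ℝ) (hγ : γ ≠ 0) (σ : ℕ → ℝ)
    (hσγ : Tendsto (fun N : ℕ => (N : ℝ) * σ N) atTop (nhds γ))
    (i : ℕ → ℕ) (hi : ∀ N, i N ≤ N - 1) :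
    Tendsto (fun N : ℕ =>
        (1 - (1 - (1 + σ N) ^ (-(i N : ℤ))) / (1 - (1 + σ N) ^ (-(N : ℤ))))
          / ((scaleFn γ 1 - scaleFn γ ((i N : ℝ) / N)) / scaleFn γ 1))
      atTop (nhds 1) := by
  have hσ : Tendsto σ atTop (𝓝 0) := by
    refine (hσγ.div_atTop tendsto_natCast_atTop_atTop).congr' ?_
    filter_upwards [eventually_ne_atTop 0] with N hN
    field_simp
  have hc := tendsto_mul_log_one_add (.of_forall fun N => N.cast_nonneg) hσ hσγ
  have hx : ∀ᶠ N in atTop, (i N : ℝ) / N ∈ Set.Ico 0 1 := by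
    filter_upwards [eventually_ne_atTop 0] with N hN
    have : (i N : ℝ) < N := by exact_mod_cast (by have := hi N; omega : i N < N)
    exact ⟨by positivity, (div_lt_one (by positivity)).mpr this⟩
  refine (tendsto_lossProb_div_lossProb hγ hc hx).congr' ?_
  have hσ_gt : ∀ᶠ N in atTop, -1 < σ N := hσ.eventually (lt_mem_nhds (by norm_num))
  filter_upwards [eventually_ne_atTop 0, hσ_gt] with N hN hσN
  rw [one_sub_zpow_div_eq_lossProb (by linarith) hN, scaleFn_sub_div_scaleFn hγ]

/-- local limit theorem at 1: if `N σ_N → γ ≠ 0` and `0 ≤ i_N ≤ N−1`, then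
the ratio of the loss probability `1 − (1 − (1+σ_N)^{−i_N})/(1 − (1+σ_N)^{−N})` to
`(s(1) − s(x_N))/s(1)` tends to `1`, where `x_N = i_N/N`. -/
theorem moran_fixation_local_limit_at_one
    (γ : ℝ) (hγ : γ ≠ 0) (σ : ℕ → ℝ)
    (hσ1 : ∀ N, σ N > -1) (hσ2 : ∀ N, σ N ≠ 0)
    (hσγ : Tendsto (fun N : ℕ => (N : ℝ) * σ N) atTop (nhds γ))
    (i : ℕ → ℕ) (hi : ∀ N, i N ≤ N - 1) :
    Tendsto (fun N : ℕ =>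
        (1 - (1 - (1 + σ N) ^ (-(i N : ℤ))) / (1 - (1 + σ N) ^ (-(N : ℤ))))
          / ((scaleFn γ 1 - scaleFn γ ((i N : ℝ) / N)) / scaleFn γ 1))
      atTop (nhds 1) :=
  moran_fixation_local_limit_at_one_general γ hγ σ hσγ i hi
end

section
/- Let γ be real and (σ_N) a sequence of reals with σ_N > −1 and N·σ_N → γ as N → ∞. Let i_N be integers with 0 ≤ i_N ≤ N and i_N/N → x for some x ∈ [0,1]. Then lim_{N→∞} N² · Σ_{j=0}^{N} p_{N,σ_N}(i_N, j) · (j/N − i_N/N) = γ·x·(1−x). If i_N = ⌊Nx⌋, the convergence is uniform in x for 0 ≤ x ≤ 1. -/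
/-!
Only the moves `i → i ± 1` change the state, and `p(i,i+1) − p(i,i−1) = σ · p(i,i−1)`, so the
scaled drift is exactly `Nσ · t(1−t)/(1+σt)` with `t = i/N`; at the absorbing states both sides
vanish. Since `Nσ_N → γ` forces `σ_N → 0`, this tends to `γx(1−x)` whenever `t → x`. For
`i = ⌊Ny⌋` we have `|t − y| ≤ 1/N`, so the convergence even holds jointly as `(N, y) → (∞, y₀)`,
and on the compact interval `[0,1]` joint convergence to a continuous limit is uniform.
-/

open Filter

/-- The Moran transition function `p_{N,σ}` on `{0,1,…,N}` (zero off `{0,…,N}²` except as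
specified): `p(0,0) = p(N,N) = 1`, boundary states are absorbing, and for `0 < i < N`:
`p(i,i+1) = (1+σ)(i/N)(1−i/N)/(1+σ i/N)`, `p(i,i−1) = (i/N)(1−i/N)/(1+σ i/N)`,
`p(i,i) = 1 − p(i,i+1) − p(i,i−1)`. -/
noncomputable def moranP (N : ℕ) (σ : ℝ) (i j : ℕ) : ℝ :=
  if i = 0 ∨ i = N then (if j = i then 1 else 0)
  else if j = i + 1 then
    (1 + σ) * ((i : ℝ) / N) * (1 - (i : ℝ) / N) / (1 + σ * ((i : ℝ) / N))
  else if j + 1 = i then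
    ((i : ℝ) / N) * (1 - (i : ℝ) / N) / (1 + σ * ((i : ℝ) / N))
  else if j = i then
    1 - (1 + σ) * ((i : ℝ) / N) * (1 - (i : ℝ) / N) / (1 + σ * ((i : ℝ) / N))
      - ((i : ℝ) / N) * (1 - (i : ℝ) / N) / (1 + σ * ((i : ℝ) / N))
  else 0

open Finset Topology

theorem IsCompact.tendstoUniformlyOn_of_tendsto_prod {ι α β : Type*} [TopologicalSpace α]
    [UniformSpace β] {p : Filter ι} {F : ι → α → β} {f : α → β} {s : Set α}
    (hs : IsCompact s) (hf : ContinuousOn f s)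
    (h : ∀ x ∈ s, Tendsto (fun q : ι × α => F q.1 q.2) (p ×ˢ 𝓝[s] x) (𝓝 (f x))) :
    TendstoUniformlyOn F f p s := by
  rw [← tendstoLocallyUniformlyOn_iff_tendstoUniformlyOn_of_compact hs,
    tendstoLocallyUniformlyOn_iff_forall_tendsto]
  exact fun x hx =>
    (((hf x hx).tendsto.comp tendsto_snd).prodMk_nhds (h x hx)).mono_right (nhds_le_uniformity _)

theorem tendsto_zero_of_tendsto_natCast_mul {u : ℕ → ℝ} {c : ℝ}
    (h : Tendsto (fun n : ℕ => (n : ℝ) * u n) atTop (𝓝 c)) : Tendsto u atTop (𝓝 0) := by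
  have h' := h.mul tendsto_one_div_atTop_nhds_zero_nat
  rw [mul_zero] at h'
  refine h'.congr' ?_
  filter_upwards [eventually_ne_atTop 0] with n hn
  field_simp

theorem tendsto_natFloor_mul_div (x : ℝ) :
    Tendsto (fun q : ℕ × ℝ => (⌊q.1 * q.2⌋₊ : ℝ) / q.1) (atTop ×ˢ 𝓝[Set.Ici 0] x) (𝓝 x) := by
  have hsnd : Tendsto (fun q : ℕ × ℝ => q.2) (atTop ×ˢ 𝓝[Set.Ici 0] x) (𝓝 x) :=
    (tendsto_nhdsWithin_of_tendsto_nhds tendsto_id).comp tendsto_snd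
  have hlower : Tendsto (fun q : ℕ × ℝ => q.2 - 1 / q.1) (atTop ×ˢ 𝓝[Set.Ici 0] x) (𝓝 x) := by
    simpa using hsnd.sub (tendsto_one_div_atTop_nhds_zero_nat.comp tendsto_fst)
  have hpos : ∀ᶠ q : ℕ × ℝ in atTop ×ˢ 𝓝[Set.Ici 0] x, 0 < q.1 ∧ 0 ≤ q.2 :=
    (tendsto_fst.eventually (eventually_gt_atTop 0)).and
      (tendsto_snd.eventually self_mem_nhdsWithin)
  refine tendsto_of_tendsto_of_tendsto_of_le_of_le' hlower hsnd ?_ ?_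
  · filter_upwards [hpos] with ⟨N, y⟩ ⟨hN, _⟩
    have hN' : (0 : ℝ) < N := by exact_mod_cast hN
    rw [sub_le_iff_le_add, ← add_div, le_div_iff₀ hN']
    linarith [Nat.lt_floor_add_one ((N : ℝ) * y)]
  · filter_upwards [hpos] with ⟨N, y⟩ ⟨hN, hy⟩
    have hN' : (0 : ℝ) < N := by exact_mod_cast hN
    rw [div_le_iff₀ hN', mul_comm]
    exact Nat.floor_le (by positivity)

/-- `p_{N,σ}(i, i−1)` as a function of `σ` and `t = i/N`. -/
noncomputable def moranDownProb (σ t : ℝ) : ℝ :=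
  t * (1 - t) / (1 + σ * t)

theorem Filter.Tendsto.mul_moranDownProb {α : Type*} {l : Filter α} {A s t : α → ℝ} {c x : ℝ}
    (hA : Tendsto A l (𝓝 c)) (hs : Tendsto s l (𝓝 0)) (ht : Tendsto t l (𝓝 x)) :
    Tendsto (fun a => A a * moranDownProb (s a) (t a)) l (𝓝 (c * x * (1 - x))) := by
  have h := hA.mul ((ht.mul ((tendsto_const_nhds (x := (1 : ℝ))).sub ht)).div
    ((tendsto_const_nhds (x := (1 : ℝ))).add (hs.mul ht)) (by simp : (1 : ℝ) + 0 * x ≠ 0))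
  simpa [moranDownProb, mul_assoc] using h

theorem sum_moranP_mul_increment {N i : ℕ} (σ : ℝ) (hi : i ≤ N) :
    ∑ j ∈ range (N + 1), moranP N σ i j * ((j : ℝ) / N - (i : ℝ) / N) =
      σ / N * moranDownProb σ ((i : ℝ) / N) := by
  by_cases hb : i = 0 ∨ i = N
  · have hvar : (i : ℝ) / N * (1 - (i : ℝ) / N) = 0 := by
      rcases hb with rfl | rfl
      · simp
      · rcases eq_or_ne (i : ℝ) 0 with h | h <;> simp [h]
    rw [moranDownProb, hvar, zero_div, mul_zero]
    refine sum_eq_zero fun j _ => ?_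
    rw [moranP, if_pos hb]
    split_ifs with h <;> simp [h]
  obtain ⟨k, rfl⟩ : ∃ k, i = k + 1 := Nat.exists_eq_add_one.mpr (by omega)
  have hzero : ∀ j ∈ range (N + 1), j ∉ ({k, k + 2} : Finset ℕ) →
      moranP N σ (k + 1) j * ((j : ℝ) / N - ((k + 1 : ℕ) : ℝ) / N) = 0 := by
    intro j _ hj
    simp only [mem_insert, mem_singleton, not_or] at hj
    by_cases hjk : j = k + 1
    · simp [hjk]
    · rw [moranP, if_neg hb, if_neg (by omega), if_neg (by omega), if_neg hjk, zero_mul]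
  have hsub : ({k, k + 2} : Finset ℕ) ⊆ range (N + 1) := by
    intro j
    simp only [mem_insert, mem_singleton, mem_range]
    omega
  rw [← sum_subset hsub hzero, sum_pair (by omega), moranP, moranP, if_neg hb, if_neg (by omega),
    if_pos rfl, if_neg hb, if_pos rfl, moranDownProb]
  push_cast
  ring

theorem sq_mul_sum_moranP_mul_increment {N i : ℕ} (σ : ℝ) (hi : i ≤ N) :
    (N : ℝ) ^ 2 * ∑ j ∈ range (N + 1), moranP N σ i j * ((j : ℝ) / N - (i : ℝ) / N) =
      N * σ * moranDownProb σ ((i : ℝ) / N) := by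
  rw [sum_moranP_mul_increment σ hi]
  rcases eq_or_ne (N : ℝ) 0 with h | h
  · simp [h]
  · field_simp

theorem moran_drift_limit_general
    (γ : ℝ) (σ : ℕ → ℝ)
    (hσγ : Tendsto (fun N : ℕ => (N : ℝ) * σ N) atTop (nhds γ))
    (i : ℕ → ℕ) (hi : ∀ N, i N ≤ N)
    (x : ℝ)
    (hix : Tendsto (fun N : ℕ => (i N : ℝ) / N) atTop (nhds x)) :
    Tendsto (fun N : ℕ => (N : ℝ) ^ 2 *
        ∑ j ∈ Finset.range (N + 1),
          moranP N (σ N) (i N) j * ((j : ℝ) / N - (i N : ℝ) / N))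
      atTop (nhds (γ * x * (1 - x)))
    ∧ TendstoUniformlyOn
        (fun (N : ℕ) (y : ℝ) => (N : ℝ) ^ 2 *
          ∑ j ∈ Finset.range (N + 1),
            moranP N (σ N) ⌊(N : ℝ) * y⌋₊ j * ((j : ℝ) / N - (⌊(N : ℝ) * y⌋₊ : ℝ) / N))
        (fun y => γ * y * (1 - y)) atTop (Set.Icc 0 1) := by
  have hσ0 := tendsto_zero_of_tendsto_natCast_mul hσγ
  refine ⟨(hσγ.mul_moranDownProb hσ0 hix).congr fun N =>
    (sq_mul_sum_moranP_mul_increment (σ N) (hi N)).symm, ?_⟩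
  refine isCompact_Icc.tendstoUniformlyOn_of_tendsto_prod (by fun_prop) fun y _ => ?_
  have hfloor := (tendsto_natFloor_mul_div y).mono_left
    (prod_mono le_rfl (nhdsWithin_mono y (Set.Icc_subset_Ici_self : Set.Icc (0 : ℝ) 1 ⊆ _)))
  refine ((hσγ.comp tendsto_fst).mul_moranDownProb (hσ0.comp tendsto_fst) hfloor).congr' ?_
  filter_upwards [tendsto_snd.eventually self_mem_nhdsWithin] with ⟨N, z⟩ ⟨_, hz1⟩
  exact (sq_mul_sum_moranP_mul_increment (σ N)
    (Nat.floor_le_of_le (mul_le_of_le_one_right N.cast_nonneg hz1))).symm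

/-- the scaled one-step drift of the Moran chain converges to the
Wright–Fisher drift `γ x (1−x)`, uniformly in `x` when `i_N = ⌊Nx⌋`. -/
theorem moran_drift_limit
    (γ : ℝ) (σ : ℕ → ℝ) (hσ : ∀ N, σ N > -1)
    (hσγ : Tendsto (fun N : ℕ => (N : ℝ) * σ N) atTop (nhds γ))
    (i : ℕ → ℕ) (hi : ∀ N, i N ≤ N)
    (x : ℝ) (hx : x ∈ Set.Icc (0 : ℝ) 1)
    (hix : Tendsto (fun N : ℕ => (i N : ℝ) / N) atTop (nhds x)) :
    Tendsto (fun N : ℕ => (N : ℝ) ^ 2 *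
        ∑ j ∈ Finset.range (N + 1),
          moranP N (σ N) (i N) j * ((j : ℝ) / N - (i N : ℝ) / N))
      atTop (nhds (γ * x * (1 - x)))
    ∧ TendstoUniformlyOn
        (fun (N : ℕ) (y : ℝ) => (N : ℝ) ^ 2 *
          ∑ j ∈ Finset.range (N + 1),
            moranP N (σ N) ⌊(N : ℝ) * y⌋₊ j * ((j : ℝ) / N - (⌊(N : ℝ) * y⌋₊ : ℝ) / N))
        (fun y => γ * y * (1 - y)) atTop (Set.Icc 0 1) :=
  moran_drift_limit_general γ σ hσγ i hi x hix
end

section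
/- Let γ be real, s(x) = ∫₀ˣ e^{−γu} du (so s(x) = (1 − e^{−γx})/γ when γ ≠ 0 and s(x) = x when γ = 0), m′(y) = e^{γy}/(y(1−y)) for 0 < y < 1, and g(x,y) = (s(1) − s(max(x,y)))·s(min(x,y))/s(1). Then for every continuous f : [0,1] → ℝ, the function h(x) = ∫₀¹ g(x,y)·f(y)·m′(y) dy is well defined (the integral converges absolutely for every x ∈ [0,1]), h is continuous on [0,1] with h(0) = h(1) = 0, h is twice continuously differentiable on (0,1), and x(1−x)h''(x) + γ x(1−x)h'(x) = −f(x) for all 0 < x < 1. -/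
open MeasureTheory

/-- The scale function `s(x) = ∫₀ˣ e^{−γu} du`. -/
noncomputable def sFn (γ x : ℝ) : ℝ := ∫ u in (0 : ℝ)..x, Real.exp (-(γ * u))

/-- The speed density `m′(y) = e^{γy}/(y(1−y))`. -/
noncomputable def mDens (γ y : ℝ) : ℝ := Real.exp (γ * y) / (y * (1 - y))

/-- The Green function `g(x,y) = (s(1) − s(max x y)) s(min x y)/s(1)`. -/
noncomputable def gFn (γ x y : ℝ) : ℝ :=
  (sFn γ 1 - sFn γ (max x y)) * sFn γ (min x y) / sFn γ 1

/-- `h(x) = ∫₀¹ g(x,y) f(y) m′(y) dy`, the Green operator applied to `f`. -/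
noncomputable def greenOp (γ : ℝ) (f : ℝ → ℝ) (x : ℝ) : ℝ :=
  ∫ y in (0 : ℝ)..1, gFn γ x y * f y * mDens γ y

/-! On `(0,1)` the Green operator splits as `h = (s(1) - s)/s(1) · A + s/s(1) · B` with
`A(x) = ∫₀ˣ s f m'` and `B(x) = ∫ₓ¹ (s(1) - s) f m'`. As `s` is `e^{|γ|}`-Lipschitz on `[0,1]`,
`s(y) ≤ e^{|γ|} y` and `s(1) - s(y) ≤ e^{|γ|} (1 - y)` absorb the singularities of
`m'(y) = e^{γy}/(y(1-y))`, so `g(x,·) m'` is bounded: this gives the integrability and, by dominated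
convergence, the continuity of `h`. Differentiating the splitting, the terms carrying the integrands
cancel and `h' = s'(B - A)/s(1)`; once more, `h'' = -γ h' - s' m' f`, and `s' m' = 1/(x(1-x))`. -/

open Set Filter Topology

lemma norm_mul_mul_le_of_abs_le {k f w C M : ℝ} (hkw : |k * w| ≤ C) (hf : ‖f‖ ≤ M) :
    ‖k * f * w‖ ≤ C * M := by
  rw [Real.norm_eq_abs, mul_right_comm, abs_mul]
  exact mul_le_mul hkw hf (norm_nonneg f) ((abs_nonneg _).trans hkw)

lemma intervalIntegrable_mul_mul_of_abs_le {k f w : ℝ → ℝ} {a b C : ℝ} (hab : a ≤ b)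
    (hk : Continuous k) (hf : ContinuousOn f (Icc a b)) (hw : Measurable w)
    (hC : ∀ y ∈ Icc a b, |k y * w y| ≤ C) :
    IntervalIntegrable (fun y => k y * f y * w y) volume a b := by
  obtain ⟨M, hM⟩ := isCompact_Icc.exists_bound_of_continuousOn hf
  rw [intervalIntegrable_iff_integrableOn_Icc_of_le hab]
  refine Integrable.mono' (g := fun _ => C * M) (integrableOn_const measure_Icc_lt_top.ne)
    ((hk.aestronglyMeasurable.mul (hf.aestronglyMeasurable measurableSet_Icc)).mul
      hw.aestronglyMeasurable) ?_
  filter_upwards [ae_restrict_mem measurableSet_Icc] with y hy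
  exact norm_mul_mul_le_of_abs_le (hC y hy) (hM y hy)

section SecondDerivative

variable {𝕜 E : Type*} [NontriviallyNormedField 𝕜] [NormedAddCommGroup E] [NormedSpace 𝕜 E]
  {F F' F'' : 𝕜 → E} {U : Set 𝕜}

lemma contDiffOn_two_of_hasDerivAt (hU : IsOpen U) (hF : ∀ x ∈ U, HasDerivAt F (F' x) x)
    (hF' : ∀ x ∈ U, HasDerivAt F' (F'' x) x) (hF'' : ContinuousOn F'' U) :
    ContDiffOn 𝕜 2 F U := by
  rw [show (2 : WithTop ℕ∞) = 0 + 1 + 1 from rfl, contDiffOn_succ_iff_deriv_of_isOpen hU]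
  refine ⟨fun x hx => (hF x hx).differentiableAt.differentiableWithinAt, by simp, ?_⟩
  refine ContDiffOn.congr ?_ fun x hx => (hF x hx).deriv
  rw [contDiffOn_succ_iff_deriv_of_isOpen hU, contDiffOn_zero]
  exact ⟨fun x hx => (hF' x hx).differentiableAt.differentiableWithinAt, by simp,
    hF''.congr fun x hx => (hF' x hx).deriv⟩

lemma deriv_deriv_eq_of_hasDerivAt (hU : IsOpen U) (hF : ∀ x ∈ U, HasDerivAt F (F' x) x)
    {x : 𝕜} {y : E} (hx : x ∈ U) (hF' : HasDerivAt F' y x) : deriv (deriv F) x = y := by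
  rw [(eventuallyEq_of_mem (hU.mem_nhds hx) fun y hy => (hF y hy).deriv).deriv_eq, hF'.deriv]

end SecondDerivative

section ScaleFunction

variable (γ : ℝ)

lemma hasDerivAt_sFn (x : ℝ) : HasDerivAt (sFn γ) (Real.exp (-(γ * x))) x := by
  have hc : Continuous fun u : ℝ => Real.exp (-(γ * u)) := by fun_prop
  exact intervalIntegral.integral_hasDerivAt_right (hc.intervalIntegrable 0 x)
    (hc.stronglyMeasurableAtFilter _ _) hc.continuousAt

lemma sFn_zero : sFn γ 0 = 0 := intervalIntegral.integral_same

lemma continuous_sFn : Continuous (sFn γ) :=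
  continuous_iff_continuousAt.2 fun x => (hasDerivAt_sFn γ x).continuousAt

lemma strictMono_sFn : StrictMono (sFn γ) :=
  strictMono_of_deriv_pos fun x => (hasDerivAt_sFn γ x).deriv ▸ Real.exp_pos _

lemma sFn_one_pos : 0 < sFn γ 1 := sFn_zero γ ▸ strictMono_sFn γ zero_lt_one

lemma abs_mul_le_abs_of_mem_Icc {u : ℝ} (hu : u ∈ Icc (0 : ℝ) 1) : |γ * u| ≤ |γ| := by
  rw [abs_mul]
  exact mul_le_of_le_one_right (abs_nonneg γ) (abs_le.2 ⟨by linarith [hu.1], hu.2⟩)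

lemma sFn_sub_sFn_le {a b : ℝ} (ha : 0 ≤ a) (hab : a ≤ b) (hb : b ≤ 1) :
    sFn γ b - sFn γ a ≤ Real.exp |γ| * (b - a) := by
  have hc : Continuous fun u : ℝ => Real.exp (-(γ * u)) := by fun_prop
  rw [sFn, sFn, intervalIntegral.integral_interval_sub_left (hc.intervalIntegrable 0 b)
    (hc.intervalIntegrable 0 a), ← abs_of_nonneg (sub_nonneg.2 hab)]
  refine (Real.le_norm_self _).trans
    (intervalIntegral.norm_integral_le_of_norm_le_const fun u hu => ?_)
  rw [uIoc_of_le hab] at hu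
  rw [Real.norm_eq_abs, Real.abs_exp, Real.exp_le_exp]
  linarith [neg_abs_le (γ * u), abs_mul_le_abs_of_mem_Icc γ ⟨ha.trans hu.1.le, hu.2.trans hb⟩]

end ScaleFunction

section SpeedDensity

variable (γ : ℝ)

lemma mul_one_sub_pos_of_mem_Ioo {y : ℝ} (hy : y ∈ Ioo (0 : ℝ) 1) : 0 < y * (1 - y) :=
  mul_pos hy.1 (sub_pos.2 hy.2)

lemma abs_mul_mDens_le {k y c : ℝ} (hy : y ∈ Icc (0 : ℝ) 1) (hc : 0 ≤ c)
    (hk : |k| ≤ c * (y * (1 - y))) : |k * mDens γ y| ≤ c * Real.exp |γ| := by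
  have hexp : Real.exp (γ * y) ≤ Real.exp |γ| :=
    Real.exp_le_exp.2 ((le_abs_self _).trans (abs_mul_le_abs_of_mem_Icc γ hy))
  rcases (mul_nonneg hy.1 (sub_nonneg.2 hy.2)).eq_or_lt with hy0 | hy0
  · -- `y ∈ {0, 1}`, where `mDens γ y` is a division by zero
    simp only [mDens, ← hy0, div_zero, mul_zero, abs_zero]
    positivity
  · calc |k * mDens γ y| = |k| / (y * (1 - y)) * Real.exp (γ * y) := by
          rw [mDens, abs_mul, abs_div, Real.abs_exp, abs_of_pos hy0]; ring
      _ ≤ c * Real.exp |γ| := by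
          gcongr
          exact (div_le_iff₀ hy0).2 hk

lemma abs_gFn_mul_mDens_le {x y : ℝ} (hx : x ∈ Icc (0 : ℝ) 1) (hy : y ∈ Icc (0 : ℝ) 1) :
    |gFn γ x y * mDens γ y| ≤ Real.exp |γ| ^ 2 / sFn γ 1 * Real.exp |γ| := by
  have hs1 := sFn_one_pos γ
  have hmono := (strictMono_sFn γ).monotone
  have hmin : 0 ≤ sFn γ (min x y) := sFn_zero γ ▸ hmono (le_min hx.1 hy.1)
  have hmin' : sFn γ (min x y) ≤ Real.exp |γ| * y := by
    have := sFn_sub_sFn_le γ le_rfl hy.1 hy.2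
    rw [sFn_zero, sub_zero, sub_zero] at this
    exact (hmono (min_le_right x y)).trans this
  have hmax : 0 ≤ sFn γ 1 - sFn γ (max x y) := sub_nonneg.2 (hmono (max_le hx.2 hy.2))
  have hmax' : sFn γ 1 - sFn γ (max x y) ≤ Real.exp |γ| * (1 - y) :=
    (sub_le_sub_left (hmono (le_max_right x y)) _).trans (sFn_sub_sFn_le γ hy.1 hy.2 le_rfl)
  refine abs_mul_mDens_le γ hy (by positivity) ?_
  rw [gFn, abs_of_nonneg (by positivity), div_le_iff₀ hs1]
  calc (sFn γ 1 - sFn γ (max x y)) * sFn γ (min x y)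
      ≤ Real.exp |γ| * (1 - y) * (Real.exp |γ| * y) :=
        mul_le_mul hmax' hmin' hmin (mul_nonneg (Real.exp_pos _).le (sub_nonneg.2 hy.2))
    _ = Real.exp |γ| ^ 2 / sFn γ 1 * (y * (1 - y)) * sFn γ 1 := by field_simp

lemma abs_sFn_mul_mDens_le {x y : ℝ} (hx : x < 1) (hy : y ∈ Icc 0 x) :
    |sFn γ y * mDens γ y| ≤ Real.exp |γ| / (1 - x) * Real.exp |γ| := by
  have hy1 : y ≤ 1 := hy.2.trans hx.le
  have hs := sFn_sub_sFn_le γ le_rfl hy.1 hy1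
  rw [sFn_zero, sub_zero, sub_zero] at hs
  refine abs_mul_mDens_le γ ⟨hy.1, hy1⟩ (div_nonneg (Real.exp_pos _).le (by linarith)) ?_
  rw [abs_of_nonneg (sFn_zero γ ▸ (strictMono_sFn γ).monotone hy.1)]
  calc sFn γ y ≤ Real.exp |γ| * y := hs
    _ ≤ Real.exp |γ| / (1 - x) * (y * (1 - y)) := by
      rw [div_mul_eq_mul_div, le_div_iff₀ (by linarith), mul_assoc]
      gcongr
      exacts [hy.1, hy.2]

lemma abs_sFn_one_sub_mul_mDens_le {x y : ℝ} (hx : 0 < x) (hy : y ∈ Icc x 1) :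
    |(sFn γ 1 - sFn γ y) * mDens γ y| ≤ Real.exp |γ| / x * Real.exp |γ| := by
  have hy0 : 0 ≤ y := hx.le.trans hy.1
  refine abs_mul_mDens_le γ ⟨hy0, hy.2⟩ (div_nonneg (Real.exp_pos _).le hx.le) ?_
  rw [abs_of_nonneg (sub_nonneg.2 ((strictMono_sFn γ).monotone hy.2))]
  calc sFn γ 1 - sFn γ y ≤ Real.exp |γ| * (1 - y) := sFn_sub_sFn_le γ hy0 hy.2 le_rfl
    _ ≤ Real.exp |γ| / x * (y * (1 - y)) := by
      rw [div_mul_eq_mul_div, le_div_iff₀ hx, mul_comm y, ← mul_assoc]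
      exact mul_le_mul_of_nonneg_left hy.1 (mul_nonneg (Real.exp_pos _).le (sub_nonneg.2 hy.2))

lemma measurable_mDens : Measurable (mDens γ) := by
  unfold mDens; fun_prop

lemma continuousOn_mDens : ContinuousOn (mDens γ) (Ioo 0 1) := by
  unfold mDens
  exact ContinuousOn.div (by fun_prop) (by fun_prop) fun y hy => (mul_one_sub_pos_of_mem_Ioo hy).ne'

end SpeedDensity

lemma continuous_gFn_left (γ y : ℝ) : Continuous fun x => gFn γ x y := by
  have := continuous_sFn γ
  unfold gFn; fun_prop

lemma continuous_gFn_right (γ x : ℝ) : Continuous fun y => gFn γ x y := by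
  have := continuous_sFn γ
  unfold gFn; fun_prop

lemma greenOp_zero (γ : ℝ) (f : ℝ → ℝ) : greenOp γ f 0 = 0 := by
  refine (intervalIntegral.integral_congr fun y hy => ?_).trans intervalIntegral.integral_zero
  rw [uIcc_of_le zero_le_one] at hy
  simp [gFn, min_eq_left hy.1, sFn_zero]

lemma greenOp_one (γ : ℝ) (f : ℝ → ℝ) : greenOp γ f 1 = 0 := by
  refine (intervalIntegral.integral_congr fun y hy => ?_).trans intervalIntegral.integral_zero
  rw [uIcc_of_le zero_le_one] at hy
  simp [gFn, max_eq_left hy.2]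

section GreenOperator

variable {γ : ℝ} {f : ℝ → ℝ}

lemma intervalIntegrable_greenIntegrand (hf : ContinuousOn f (Icc 0 1)) {x a b : ℝ}
    (hx : x ∈ Icc (0 : ℝ) 1) (ha : 0 ≤ a) (hab : a ≤ b) (hb : b ≤ 1) :
    IntervalIntegrable (fun y => gFn γ x y * f y * mDens γ y) volume a b :=
  intervalIntegrable_mul_mul_of_abs_le hab (continuous_gFn_right γ x)
    (hf.mono (Icc_subset_Icc ha hb)) (measurable_mDens γ)
    fun _ hy => abs_gFn_mul_mDens_le γ hx ⟨ha.trans hy.1, hy.2.trans hb⟩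

lemma continuousOn_greenOp (hf : ContinuousOn f (Icc 0 1)) :
    ContinuousOn (greenOp γ f) (Icc 0 1) := by
  obtain ⟨M, hM⟩ := isCompact_Icc.exists_bound_of_continuousOn hf
  intro x₀ _
  refine intervalIntegral.continuousWithinAt_of_dominated_interval
    (bound := fun _ => Real.exp |γ| ^ 2 / sFn γ 1 * Real.exp |γ| * M) ?_ ?_
    intervalIntegrable_const
    (ae_of_all _ fun y _ =>
      (((continuous_gFn_left γ y).mul_const _).mul_const _).continuousWithinAt)
  · filter_upwards [self_mem_nhdsWithin] with x hx
    exact (intervalIntegrable_greenIntegrand hf hx le_rfl zero_le_one le_rfl).def'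
      |>.aestronglyMeasurable
  · filter_upwards [self_mem_nhdsWithin] with x hx
    refine ae_of_all _ fun y hy => ?_
    rw [uIoc_of_le zero_le_one] at hy
    exact norm_mul_mul_le_of_abs_le (abs_gFn_mul_mDens_le γ hx (Ioc_subset_Icc_self hy))
      (hM y (Ioc_subset_Icc_self hy))

noncomputable def greenLower (γ : ℝ) (f : ℝ → ℝ) (x : ℝ) : ℝ :=
  ∫ y in (0 : ℝ)..x, sFn γ y * f y * mDens γ y

noncomputable def greenUpper (γ : ℝ) (f : ℝ → ℝ) (x : ℝ) : ℝ :=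
  ∫ y in x..(1 : ℝ), (sFn γ 1 - sFn γ y) * f y * mDens γ y

lemma greenOp_eq (hf : ContinuousOn f (Icc 0 1)) {x : ℝ} (hx : x ∈ Ioo (0 : ℝ) 1) :
    greenOp γ f x = (sFn γ 1 - sFn γ x) / sFn γ 1 * greenLower γ f x
      + sFn γ x / sFn γ 1 * greenUpper γ f x := by
  have hx' := Ioo_subset_Icc_self hx
  rw [greenOp, ← intervalIntegral.integral_add_adjacent_intervals
      (intervalIntegrable_greenIntegrand hf hx' le_rfl hx.1.le hx.2.le)
      (intervalIntegrable_greenIntegrand hf hx' hx.1.le hx.2.le le_rfl),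
    greenLower, greenUpper, ← intervalIntegral.integral_const_mul,
    ← intervalIntegral.integral_const_mul]
  congr 1 <;> refine intervalIntegral.integral_congr fun y hy => ?_
  · rw [uIcc_of_le hx.1.le] at hy
    simp only [gFn, max_eq_left hy.2, min_eq_right hy.2]
    ring
  · rw [uIcc_of_le hx.2.le] at hy
    simp only [gFn, max_eq_right hy.1, min_eq_left hy.1]
    ring

lemma continuousOn_mul_mul_mDens {k : ℝ → ℝ} (hk : Continuous k)
    (hf : ContinuousOn f (Icc 0 1)) :
    ContinuousOn (fun y => k y * f y * mDens γ y) (Ioo 0 1) :=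
  (hk.continuousOn.mul (hf.mono Ioo_subset_Icc_self)).mul (continuousOn_mDens γ)

lemma hasDerivAt_greenLower (hf : ContinuousOn f (Icc 0 1)) {x : ℝ} (hx : x ∈ Ioo (0 : ℝ) 1) :
    HasDerivAt (greenLower γ f) (sFn γ x * f x * mDens γ x) x :=
  have hcont := continuousOn_mul_mul_mDens (γ := γ) (continuous_sFn γ) hf
  intervalIntegral.integral_hasDerivAt_right
    (intervalIntegrable_mul_mul_of_abs_le hx.1.le (continuous_sFn γ)
      (hf.mono (Icc_subset_Icc le_rfl hx.2.le)) (measurable_mDens γ)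
      fun _ hy => abs_sFn_mul_mDens_le γ hx.2 hy)
    (hcont.stronglyMeasurableAtFilter isOpen_Ioo x hx)
    (hcont.continuousAt (Ioo_mem_nhds hx.1 hx.2))

lemma hasDerivAt_greenUpper (hf : ContinuousOn f (Icc 0 1)) {x : ℝ} (hx : x ∈ Ioo (0 : ℝ) 1) :
    HasDerivAt (greenUpper γ f) (-((sFn γ 1 - sFn γ x) * f x * mDens γ x)) x :=
  have hcont := continuousOn_mul_mul_mDens (γ := γ) (continuous_const.sub (continuous_sFn γ)) hf
  intervalIntegral.integral_hasDerivAt_left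
    (intervalIntegrable_mul_mul_of_abs_le hx.2.le (continuous_const.sub (continuous_sFn γ))
      (hf.mono (Icc_subset_Icc hx.1.le le_rfl)) (measurable_mDens γ)
      fun _ hy => abs_sFn_one_sub_mul_mDens_le γ hx.1 hy)
    (hcont.stronglyMeasurableAtFilter isOpen_Ioo x hx)
    (hcont.continuousAt (Ioo_mem_nhds hx.1 hx.2))

noncomputable def greenOpDeriv (γ : ℝ) (f : ℝ → ℝ) (x : ℝ) : ℝ :=
  Real.exp (-(γ * x)) * (greenUpper γ f x - greenLower γ f x) / sFn γ 1

lemma hasDerivAt_greenOp (hf : ContinuousOn f (Icc 0 1)) {x : ℝ} (hx : x ∈ Ioo (0 : ℝ) 1) :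
    HasDerivAt (greenOp γ f) (greenOpDeriv γ f x) x := by
  have hs := hasDerivAt_sFn γ x
  have hsplit := ((((hasDerivAt_const x (sFn γ 1)).sub hs).div_const (sFn γ 1)).mul
    (hasDerivAt_greenLower (γ := γ) hf hx)).add
    ((hs.div_const (sFn γ 1)).mul (hasDerivAt_greenUpper (γ := γ) hf hx))
  refine (hsplit.congr_deriv ?_).congr_of_eventuallyEq ?_
  · rw [Pi.sub_apply, greenOpDeriv]; ring
  · filter_upwards [Ioo_mem_nhds hx.1 hx.2] with z hz using greenOp_eq hf hz

lemma hasDerivAt_greenOpDeriv (hf : ContinuousOn f (Icc 0 1)) {x : ℝ} (hx : x ∈ Ioo (0 : ℝ) 1) :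
    HasDerivAt (greenOpDeriv γ f) (-γ * greenOpDeriv γ f x - f x / (x * (1 - x))) x := by
  have hexp : HasDerivAt (fun x => Real.exp (-(γ * x))) (-γ * Real.exp (-(γ * x))) x := by
    simpa [mul_comm] using ((hasDerivAt_id x).const_mul γ).neg.exp
  refine ((hexp.mul ((hasDerivAt_greenUpper hf hx).sub (hasDerivAt_greenLower hf hx))).div_const
    (sFn γ 1)).congr_deriv ?_
  have hx0 := (mul_one_sub_pos_of_mem_Ioo hx).ne'
  have hs1 := (sFn_one_pos γ).ne'
  rw [Pi.sub_apply, greenOpDeriv, mDens, Real.exp_neg]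
  field_simp
  ring

end GreenOperator

/-- for continuous `f` on `[0,1]`, `h(x) = ∫₀¹ g(x,y) f(y) m′(y) dy` is well
defined (absolutely convergent integral), continuous on `[0,1]` with `h(0) = h(1) = 0`,
twice continuously differentiable on `(0,1)`, and solves `L h = −f` on `(0,1)`. -/
theorem green_operator_solves_dirichlet_problem
    (γ : ℝ) (f : ℝ → ℝ) (hf : ContinuousOn f (Set.Icc 0 1)) :
    (∀ x ∈ Set.Icc (0 : ℝ) 1,
        IntervalIntegrable (fun y => gFn γ x y * f y * mDens γ y) volume 0 1)
    ∧ ContinuousOn (greenOp γ f) (Set.Icc 0 1)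
    ∧ greenOp γ f 0 = 0 ∧ greenOp γ f 1 = 0
    ∧ ContDiffOn ℝ 2 (greenOp γ f) (Set.Ioo 0 1)
    ∧ ∀ x ∈ Set.Ioo (0 : ℝ) 1,
        x * (1 - x) * deriv (deriv (greenOp γ f)) x
          + γ * x * (1 - x) * deriv (greenOp γ f) x = -f x := by
  have h' := fun x (hx : x ∈ Ioo (0 : ℝ) 1) => hasDerivAt_greenOp (γ := γ) hf hx
  have h'' := fun x (hx : x ∈ Ioo (0 : ℝ) 1) => hasDerivAt_greenOpDeriv (γ := γ) hf hx
  have h''_cont :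
      ContinuousOn (fun x => -γ * greenOpDeriv γ f x - f x / (x * (1 - x))) (Ioo 0 1) :=
    (continuousOn_const.mul fun x hx => (h'' x hx).continuousAt.continuousWithinAt).sub
      ((hf.mono Ioo_subset_Icc_self).div (by fun_prop)
        fun x hx => (mul_one_sub_pos_of_mem_Ioo hx).ne')
  refine ⟨fun x hx => intervalIntegrable_greenIntegrand hf hx le_rfl zero_le_one le_rfl,
    continuousOn_greenOp hf, greenOp_zero γ f, greenOp_one γ f,
    contDiffOn_two_of_hasDerivAt isOpen_Ioo h' h'' h''_cont, fun x hx => ?_⟩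
  rw [deriv_deriv_eq_of_hasDerivAt isOpen_Ioo h' hx (h'' x hx), (h' x hx).deriv, mul_sub,
    mul_div_cancel₀ (f x) (mul_one_sub_pos_of_mem_Ioo hx).ne']
  ring
end
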